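/- Let ρ^i_α and C^γ_{αβ} be smooth functions on ℝ^n satisfying the Lie algebroid structure equations, let L : ℝ^k × ℝ^n × ℝ^{mk} → ℝ be smooth, and let (ξ_A)^β_B be smooth functions on ℝ^k × ℝ^n × ℝ^{mk} satisfying at every point, for each α: Σ_A [∂²L/∂t^A∂y^α_A + Σ_{i,β} ρ^i_β · ∂²L/∂q^i∂y^α_A · y^β_A + Σ_{β,γ} C^γ_{αβ} · ∂L/∂y^γ_A · y^β_A + Σ_{B,β} ∂²L/∂y^β_B∂y^α_A · (ξ_A)^β_B] = Σ_i ρ^i_α · ∂L/∂q^i. Let Φ̃(t) = (t, φ^i(t), φ^α_A(t)) be a smooth map satisfying ∂φ^i/∂t^A(t) = Σ_α ρ^i_α(φ(t)) φ^α_A(t) and ∂φ^β_B/∂t^A(t) = (ξ_A)^β_B(Φ̃(t)) for all t. Then Φ̃ solves the Euler–Lagrange field equations on the Lie algebroid: Σ_{A=1}^k ∂/∂t^A[(∂L/∂y^α_A)(Φ̃(t))] = Σ_i ρ^i_α(φ(t)) · (∂L/∂q^i)(Φ̃(t)) − Σ_{A,β,γ} C^γ_{αβ}(φ(t)) · φ^β_A(t)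 · (∂L/∂y^γ_A)(Φ̃(t)) for all α and t. -/

import Mathlib

noncomputable section

/-- `ℝ^k × ℝ^n × ℝ^{mk}`: the local model of `ℝ^k × ⊕^k E` (resp. `ℝ^k × ⊕^k E^*`)
for a rank-`m` Lie algebroid `E` over an `n`-dimensional base. -/
abbrev AlgPhase (k n m : ℕ) : Type :=
  (Fin k → ℝ) × (Fin n → ℝ) × (Fin m → Fin k → ℝ)

/-- Partial derivative `∂f/∂t^A` of a function on `ℝ^k`. -/
def pdR {k : ℕ} (A : Fin k) (f : (Fin k → ℝ) → ℝ) (t : Fin k → ℝ) : ℝ :=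
  fderiv ℝ f t (Pi.single A 1)

/-- Partial derivative `∂f/∂q^i` of a function on `ℝ^n`. -/
def pdn {n : ℕ} (i : Fin n) (f : (Fin n → ℝ) → ℝ) (q : Fin n → ℝ) : ℝ :=
  fderiv ℝ f q (Pi.single i 1)

/-- Partial derivative `∂f/∂t^A` on `AlgPhase`. -/
def pdt {k n m : ℕ} (A : Fin k) (f : AlgPhase k n m → ℝ) (p : AlgPhase k n m) : ℝ :=
  fderiv ℝ f p (Pi.single A 1, 0, 0)

/-- Partial derivative `∂f/∂q^i` on `AlgPhase`. -/
def pdq {k n m : ℕ} (i : Fin n) (f : AlgPhase k n m → ℝ) (p : AlgPhase k n m) : ℝ :=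
  fderiv ℝ f p (0, Pi.single i 1, 0)

/-- Partial derivative with respect to the fibre coordinate with indices `(α, A)`
(`∂f/∂y^α_A`, resp. `∂f/∂y^A_α`). -/
def pdy {k n m : ℕ} (α : Fin m) (A : Fin k) (f : AlgPhase k n m → ℝ)
    (p : AlgPhase k n m) : ℝ :=
  fderiv ℝ f p (0, 0, Pi.single α (Pi.single A 1))

/-- The Lie algebroid structure equations for local anchor components `ρ^i_α` and
structure functions `C^γ_{αβ}` (written `Cf γ α β`) on `ℝ^n`:
the cyclic Jacobi-type identity and the anchor compatibility identity. -/
def StructureEqs {n m : ℕ} (ρ : Fin n → Fin m → (Fin n → ℝ) → ℝ)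
    (Cf : Fin m → Fin m → Fin m → (Fin n → ℝ) → ℝ) : Prop :=
  (∀ (q : Fin n → ℝ) (ν α β γ : Fin m),
      ((∑ i, ρ i α q * pdn i (Cf ν β γ) q) + ∑ μ, Cf ν α μ q * Cf μ β γ q)
      + ((∑ i, ρ i β q * pdn i (Cf ν γ α) q) + ∑ μ, Cf ν β μ q * Cf μ γ α q)
      + ((∑ i, ρ i γ q * pdn i (Cf ν α β) q) + ∑ μ, Cf ν γ μ q * Cf μ α β q) = 0) ∧
  (∀ (q : Fin n → ℝ) (i : Fin n) (α β : Fin m),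
      (∑ j, (ρ j α q * pdn j (ρ i β) q - ρ j β q * pdn j (ρ i α) q))
        = ∑ γ, ρ i γ q * Cf γ α β q)

/-! By the chain rule, `∂_A [(∂L/∂y^α_A) ∘ Φ̃]` is `∂²L/∂t^A∂y^α_A` plus the `q`- and
`y`-derivatives of `∂L/∂y^α_A` weighted by `∂φ^i/∂t^A` and `∂φ^β_B/∂t^A`. Substituting the
two differential equations satisfied by `Φ̃`, the sum over `A` becomes the left-hand side of the
identity defining `ξ` minus its `C`-term, which is the Euler–Lagrange equation. -/

open Finset

theorem LinearMap.apply_eq_sum_single {R M ι : Type*} [CommSemiring R] [AddCommMonoid M]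
    [Module R M] [Fintype ι] [DecidableEq ι] (f : (ι → R) →ₗ[R] M) (x : ι → R) :
    f x = ∑ i, x i • f (Pi.single i 1) := by
  conv_lhs => rw [← univ_sum_single x]
  rw [map_sum]
  refine sum_congr rfl fun i _ => ?_
  rw [← map_smul, ← Pi.single_smul, smul_eq_mul, mul_one]

theorem ContinuousLinearMap.algPhase_apply_eq_sum {k n m : ℕ} (D : AlgPhase k n m →L[ℝ] ℝ)
    (u : Fin k → ℝ) (v : Fin n → ℝ) (w : Fin m → Fin k → ℝ) :
    D (u, v, w) = D (u, 0, 0) + ∑ i, v i * D (0, Pi.single i 1, 0)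
      + ∑ β, ∑ B, w β B * D (0, 0, Pi.single β (Pi.single B 1)) := by
  have hsplit : ((u, v, w) : AlgPhase k n m)
      = (u, 0, 0) + (0, v, 0) + ∑ β, (0, 0, Pi.single β (w β)) := by
    simp [Prod.ext_iff, Prod.fst_sum, Prod.snd_sum, univ_sum_single]
  have hv := (D.toLinearMap ∘ₗ LinearMap.inr ℝ _ _ ∘ₗ LinearMap.inl ℝ _ _).apply_eq_sum_single v
  have hw β := (D.toLinearMap ∘ₗ LinearMap.inr ℝ _ _ ∘ₗ LinearMap.inr ℝ _ _ ∘ₗ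
    LinearMap.single ℝ (fun _ => Fin k → ℝ) β).apply_eq_sum_single (w β)
  simp only [LinearMap.comp_apply, LinearMap.inl_apply, LinearMap.inr_apply,
    LinearMap.coe_single, ContinuousLinearMap.coe_coe, smul_eq_mul] at hv hw
  rw [hsplit, map_add, map_add, map_sum, hv]
  simp only [hw]

theorem pdR_comp_algPhase {k n m : ℕ} {f : AlgPhase k n m → ℝ} {φq : (Fin k → ℝ) → Fin n → ℝ}
    {φy : (Fin k → ℝ) → Fin m → Fin k → ℝ} {t : Fin k → ℝ}
    (hf : DifferentiableAt ℝ f (t, φq t, φy t)) (hq : DifferentiableAt ℝ φq t)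
    (hy : DifferentiableAt ℝ φy t) (A : Fin k) :
    pdR A (fun s => f (s, φq s, φy s)) t
      = pdt A f (t, φq t, φy t) + ∑ i, pdR A (fun s => φq s i) t * pdq i f (t, φq t, φy t)
        + ∑ β, ∑ B, pdR A (fun s => φy s β B) t * pdy β B f (t, φq t, φy t) := by
  have hyβ β : DifferentiableAt ℝ (fun s => φy s β) t := differentiableAt_pi.1 hy β
  have hcomp : HasFDerivAt (fun s => f (s, φq s, φy s))
      ((fderiv ℝ f (t, φq t, φy t)).comp
        ((ContinuousLinearMap.id ℝ _).prod ((fderiv ℝ φq t).prod (fderiv ℝ φy t)))) t :=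
    hf.hasFDerivAt.comp t ((hasFDerivAt_id t).prodMk (hq.hasFDerivAt.prodMk hy.hasFDerivAt))
  simp only [pdR, pdt, pdq, pdy, hcomp.fderiv, fderiv_apply hq, fderiv_apply (hyβ _),
    fderiv_apply hy]
  exact ContinuousLinearMap.algPhase_apply_eq_sum _ _ _ _

theorem stmt16_general {k n m : ℕ}
    (ρ : Fin n → Fin m → (Fin n → ℝ) → ℝ)
    (Cf : Fin m → Fin m → Fin m → (Fin n → ℝ) → ℝ)
    (L : AlgPhase k n m → ℝ) (hL : ContDiff ℝ (⊤ : ℕ∞) L)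
    (ξ : Fin k → Fin m → Fin k → AlgPhase k n m → ℝ)
    (hξ : ∀ (p : AlgPhase k n m) (α : Fin m),
      ∑ A, (pdt A (pdy α A L) p
          + (∑ i, ∑ β, ρ i β p.2.1 * pdq i (pdy α A L) p * p.2.2 β A)
          + (∑ β, ∑ γ, Cf γ α β p.2.1 * pdy γ A L p * p.2.2 β A)
          + (∑ B, ∑ β, pdy β B (pdy α A L) p * ξ A β B p))
        = ∑ i, ρ i α p.2.1 * pdq i L p)
    (φq : (Fin k → ℝ) → Fin n → ℝ) (φy : (Fin k → ℝ) → Fin m → Fin k → ℝ)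
    (hφq : ContDiff ℝ (⊤ : ℕ∞) φq) (hφy : ContDiff ℝ (⊤ : ℕ∞) φy)
    (hmor : ∀ t (i : Fin n) (A : Fin k),
      pdR A (fun s => φq s i) t = ∑ α, ρ i α (φq t) * φy t α A)
    (hsec : ∀ t (A B : Fin k) (β : Fin m),
      pdR A (fun s => φy s β B) t = ξ A β B (t, φq t, φy t)) :
    ∀ t (α : Fin m),
      ∑ A, pdR A (fun s => pdy α A L (s, φq s, φy s)) t
        = (∑ i, ρ i α (φq t) * pdq i L (t, φq t, φy t))
          - ∑ A, ∑ β, ∑ γ, Cf γ α β (φq t) * φy t β A * pdy γ A L (t, φq t, φy t) := by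
  intro t α
  have hpdy A : Differentiable ℝ (pdy α A L) :=
    ((hL.fderiv_right (m := 1) (by norm_cast)).clm_apply contDiff_const).differentiable
      one_ne_zero
  rw [eq_sub_iff_add_eq, ← hξ (t, φq t, φy t) α, ← sum_add_distrib]
  refine sum_congr rfl fun A _ => ?_
  rw [pdR_comp_algPhase (hpdy A _) (hφq.differentiable (by simp) t)
    (hφy.differentiable (by simp) t)]
  simp only [hmor, hsec, sum_mul, mul_right_comm _ (φy t _ A), mul_comm (ξ A _ _ _)]
  rw [sum_comm (s := (univ : Finset (Fin m))) (t := (univ : Finset (Fin k)))]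
  ring

/-- the Euler–Lagrange field equations on a Lie algebroid. If the
coefficients `(ξ_A)^β_B` satisfy the geometric Euler–Lagrange identity and
`Φ̃(t) = (t, φ^i(t), φ^α_A(t))` satisfies `∂φ^i/∂t^A = Σ_α ρ^i_α(φ) φ^α_A` and
`∂φ^β_B/∂t^A = (ξ_A)^β_B ∘ Φ̃`, then `Φ̃` solves the Euler–Lagrange equations on the
algebroid. -/
theorem stmt16 {k n m : ℕ}
    (ρ : Fin n → Fin m → (Fin n → ℝ) → ℝ) (hρ : ∀ i α, ContDiff ℝ (⊤ : ℕ∞) (ρ i α))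
    (Cf : Fin m → Fin m → Fin m → (Fin n → ℝ) → ℝ)
    (hC : ∀ γ α β, ContDiff ℝ (⊤ : ℕ∞) (Cf γ α β))
    (hstr : StructureEqs ρ Cf)
    (L : AlgPhase k n m → ℝ) (hL : ContDiff ℝ (⊤ : ℕ∞) L)
    (ξ : Fin k → Fin m → Fin k → AlgPhase k n m → ℝ)
    (hξs : ∀ A β B, ContDiff ℝ (⊤ : ℕ∞) (ξ A β B))
    (hξ : ∀ (p : AlgPhase k n m) (α : Fin m),
      ∑ A, (pdt A (pdy α A L) p
          + (∑ i, ∑ β, ρ i β p.2.1 * pdq i (pdy α A L) p * p.2.2 β A)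
          + (∑ β, ∑ γ, Cf γ α β p.2.1 * pdy γ A L p * p.2.2 β A)
          + (∑ B, ∑ β, pdy β B (pdy α A L) p * ξ A β B p))
        = ∑ i, ρ i α p.2.1 * pdq i L p)
    (φq : (Fin k → ℝ) → Fin n → ℝ) (φy : (Fin k → ℝ) → Fin m → Fin k → ℝ)
    (hφq : ContDiff ℝ (⊤ : ℕ∞) φq) (hφy : ContDiff ℝ (⊤ : ℕ∞) φy)
    (hmor : ∀ t (i : Fin n) (A : Fin k),
      pdR A (fun s => φq s i) t = ∑ α, ρ i α (φq t) * φy t α A)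
    (hsec : ∀ t (A B : Fin k) (β : Fin m),
      pdR A (fun s => φy s β B) t = ξ A β B (t, φq t, φy t)) :
    ∀ t (α : Fin m),
      ∑ A, pdR A (fun s => pdy α A L (s, φq s, φy s)) t
        = (∑ i, ρ i α (φq t) * pdq i L (t, φq t, φy t))
          - ∑ A, ∑ β, ∑ γ, Cf γ α β (φq t) * φy t β A * pdy γ A L (t, φq t, φy t) :=
  stmt16_general ρ Cf L hL ξ hξ φq φy hφq hφy hmor hsec
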